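/- Let E be the open region bounded by a simple polygonal chain C from x to y together with the straight line segment from x to y. If a line segment uv both enters and exits E, then uv intersects a vertex or an edge of the chain C. -/

import Mathlib

/-!
Pick `p ∈ uv ∩ E`. Each of the subsegments `up` and `pv` runs from `E` to outside `E`, so by
connectedness each meets `frontier E`, say at `a` and `b`; then `p` lies on the segment `ab`.
If neither `a` nor `b` were on the chain, both would lie on the convex set `xy`, hence so would
`p`; but `xy ⊆ frontier E` is disjoint from the open set `E`.
-/

open Set

theorem IsPreconnected.inter_frontier_nonempty {α : Type*} [TopologicalSpace α] {s t : Set α}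
    (hs : IsPreconnected s) (hst : (s ∩ t).Nonempty) (hsdiff : (s \ t).Nonempty) :
    (s ∩ frontier t).Nonempty := by
  by_contra! hfr
  have off_frontier : ∀ z ∈ s, z ∉ closure t \ interior t := fun z hz hzfr =>
    (eq_empty_iff_forall_notMem.mp hfr) z ⟨hz, hzfr⟩
  obtain ⟨p, hps, hpt⟩ := hst
  obtain ⟨q, hqs, hqt⟩ := hsdiff
  have hcover : s ⊆ interior t ∪ (closure t)ᶜ := fun z hz => by
    by_cases hzt : z ∈ closure t
    · exact Or.inl (not_not.mp fun hzi => off_frontier z hz ⟨hzt, hzi⟩)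
    · exact Or.inr hzt
  have hp : p ∈ interior t := not_not.mp fun hpi => off_frontier p hps ⟨subset_closure hpt, hpi⟩
  have hq : q ∉ closure t := fun hqc => off_frontier q hqs ⟨hqc, fun hqi => hqt (interior_subset hqi)⟩
  obtain ⟨z, -, hzi, hzc⟩ := hs _ _ isOpen_interior isClosed_closure.isOpen_compl hcover
    ⟨p, hps, hp⟩ ⟨q, hqs, hq⟩
  exact hzc (interior_subset_closure hzi)

section

variable {V : Type*} [AddCommGroup V] [Module ℝ V] [TopologicalSpace V] [ContinuousAdd V]
  [ContinuousSMul ℝ V]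

theorem segment_inter_frontier_not_subset_of_convex {E S : Set V} {u v : V}
    (hS : Convex ℝ S) (hSE : Disjoint S E) (hu : u ∉ E) (hv : v ∉ E)
    (hmeets : (segment ℝ u v ∩ E).Nonempty) : ¬ segment ℝ u v ∩ frontier E ⊆ S := by
  intro hsub
  obtain ⟨p, hpuv, hpE⟩ := hmeets
  obtain ⟨a, hap, haE⟩ := (convex_segment u p).isPreconnected.inter_frontier_nonempty
    ⟨p, right_mem_segment ℝ u p, hpE⟩ ⟨u, left_mem_segment ℝ u p, hu⟩
  obtain ⟨b, hbp, hbE⟩ := (convex_segment p v).isPreconnected.inter_frontier_nonempty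
    ⟨p, left_mem_segment ℝ p v, hpE⟩ ⟨v, right_mem_segment ℝ p v, hv⟩
  have hupv : Wbtw ℝ u p v := mem_segment_iff_wbtw.mp hpuv
  have huap : Wbtw ℝ u a p := mem_segment_iff_wbtw.mp hap
  have hpbv : Wbtw ℝ p b v := mem_segment_iff_wbtw.mp hbp
  have haS : a ∈ S := hsub ⟨(hupv.trans_left huap).mem_segment, haE⟩
  have hbS : b ∈ S := hsub ⟨(hupv.trans_right hpbv).mem_segment, hbE⟩
  have hpab : p ∈ segment ℝ a b :=
    ((hupv.trans_left_right huap).trans_right_left hpbv).mem_segment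
  exact hSE.notMem_of_mem_left (hS.segment_subset haS hbS hpab) hpE

end

theorem segment_enter_exit_meets_chain_general (m : ℕ)
    (c : Fin (m + 1) → EuclideanSpace ℝ (Fin 2))
    (x y : EuclideanSpace ℝ (Fin 2))
    (E : Set (EuclideanSpace ℝ (Fin 2))) (hEopen : IsOpen E)
    (hfront : frontier E =
      (⋃ i : Fin m, segment ℝ (c i.castSucc) (c i.succ)) ∪ segment ℝ x y)
    (u v : EuclideanSpace ℝ (Fin 2))
    (hu : u ∉ closure E) (hv : v ∉ closure E)
    (hmeets : (segment ℝ u v ∩ E).Nonempty) :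
    (segment ℝ u v ∩ ⋃ i : Fin m, segment ℝ (c i.castSucc) (c i.succ)).Nonempty := by
  by_contra hchain
  have hxy_frontier : segment ℝ x y ⊆ frontier E := hfront ▸ subset_union_right
  refine segment_inter_frontier_not_subset_of_convex (convex_segment x y)
    ((disjoint_frontier_iff_isOpen.mpr hEopen).mono_left hxy_frontier)
    (fun h => hu (subset_closure h)) (fun h => hv (subset_closure h)) hmeets ?_
  rintro z ⟨hzuv, hzE⟩
  rw [hfront] at hzE
  exact hzE.resolve_left fun hzC => hchain ⟨z, hzuv, hzC⟩

/-- Let `E` be the open region bounded by a simple polygonal chain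
`C = ⟨c 0, …, c m⟩` from `x` to `y` together with the segment `xy` (so the
frontier of `E` is the union of the chain's edges with `segment x y`). If the
segment `uv` both enters and exits `E` (it meets `E` but both endpoints lie
outside the closure of `E`), then `uv` intersects a vertex or an edge of the
chain `C`. -/
theorem segment_enter_exit_meets_chain (m : ℕ)
    (c : Fin (m + 1) → EuclideanSpace ℝ (Fin 2))
    (x y : EuclideanSpace ℝ (Fin 2)) (hx : c 0 = x) (hy : c (Fin.last m) = y)
    (E : Set (EuclideanSpace ℝ (Fin 2))) (hEopen : IsOpen E)
    (hfront : frontier E =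
      (⋃ i : Fin m, segment ℝ (c i.castSucc) (c i.succ)) ∪ segment ℝ x y)
    (u v : EuclideanSpace ℝ (Fin 2))
    (hu : u ∉ closure E) (hv : v ∉ closure E)
    (hmeets : (segment ℝ u v ∩ E).Nonempty) :
    (segment ℝ u v ∩ ⋃ i : Fin m, segment ℝ (c i.castSucc) (c i.succ)).Nonempty :=
  segment_enter_exit_meets_chain_general m c x y E hEopen hfront u v hu hv hmeets
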